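/- Let T_Γ = (V,E) be a linkage type and (x_i) a Cauchy sequence in (Emb(T_Γ), d_path). Then there exist a subsequence (x_{n_k}), a continuous path γ : [0,1] → (ℝ^d)^V with γ((0,1]) ⊆ Emb(T_Γ), and a strictly decreasing sequence (t_k) in (0,1] with t_k → 0 such that γ(t_k) = x_{n_k} for all k; moreover γ(0) equals the limit of (x_i) in the complete space (ℝ^d)^V. -/

import Mathlib

/-!
Since `d_path` dominates the Euclidean distance, the sequence converges to some `L` in
`(ℝ^d)^V`. Pass to a subsequence whose consecutive terms are joined inside `Emb(T_Γ)` by paths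
of length `< 2⁻ᵏ`, and run the `k`-th path on `[2⁻⁽ᵏ⁺¹⁾, 2⁻ᵏ]`. On that piece the concatenation
stays within `2⁻ᵏ + ‖x_{n_{k+1}} - L‖` of `L`, so setting `γ 0 = L` makes it continuous at `0`.
-/

open scoped RealInnerProductSpace ENNReal
open Set Filter

noncomputable section

abbrev Pt (d : ℕ) := EuclideanSpace ℝ (Fin d)
abbrev Conf (V : Type*) [Fintype V] (d : ℕ) := PiLp 2 (fun _ : V => Pt d)

def closedSeg {V : Type*} {d : ℕ} (x : V → Pt d) (e : Sym2 V) : Set (Pt d) :=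
  Sym2.lift ⟨fun u v => segment ℝ (x u) (x v), fun u v => segment_symm ℝ (x u) (x v)⟩ e

def openSeg {V : Type*} {d : ℕ} (x : V → Pt d) (e : Sym2 V) : Set (Pt d) :=
  Sym2.lift ⟨fun u v => openSegment ℝ (x u) (x v), fun u v => openSegment_symm ℝ (x u) (x v)⟩ e

def edgeLen {V : Type*} {d : ℕ} (x : V → Pt d) (e : Sym2 V) : ℝ :=
  Sym2.lift ⟨fun u v => dist (x u) (x v), fun u v => dist_comm (x u) (x v)⟩ e

structure LinkageType (V : Type*) [Fintype V] where
  E : Finset (Sym2 V)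
  not_diag : ∀ e ∈ E, ¬ e.IsDiag

def IsLinkEmbedding {V : Type*} [Fintype V] {d : ℕ} (T : LinkageType V) (x : V → Pt d) : Prop :=
  Function.Injective x ∧
  ∀ e ∈ T.E, ∀ e' ∈ T.E, e ≠ e' →
    openSeg x e ∩ openSeg x e' = ∅ ∧
    ∀ p ∈ closedSeg x e ∩ closedSeg x e', ∃ v, v ∈ e ∧ v ∈ e' ∧ x v = p

def EmbSet {V : Type*} [Fintype V] (T : LinkageType V) (d : ℕ) : Set (Conf V d) :=
  {x | IsLinkEmbedding T x}

def CimmSet {V : Type*} [Fintype V] (T : LinkageType V) (d : ℕ) (ℓ : Sym2 V → ℝ) :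
    Set (Conf V d) := {x | ∀ e ∈ T.E, edgeLen x e = ℓ e}

def CSet {V : Type*} [Fintype V] (T : LinkageType V) (d : ℕ) (ℓ : Sym2 V → ℝ) :
    Set (Conf V d) := CimmSet T d ℓ ∩ EmbSet T d

def pathInf {X : Type*} [EMetricSpace X] (S : Set X) (x y : X) : ℝ≥0∞ :=
  ⨅ (γ : ℝ → X) (_ : ContinuousOn γ (Set.Icc 0 1)) (_ : γ 0 = x) (_ : γ 1 = y)
    (_ : Set.MapsTo γ (Set.Icc 0 1) S), eVariationOn γ (Set.Icc 0 1)

def dpath {X : Type*} [EMetricSpace X] (S : Set X) (x y : X) : ℝ :=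
  (min (pathInf S x y) 1).toReal

structure ModelsPathMetric {α : Type*} [EMetricSpace α] (S : Set α) (X : Type*)
    [MetricSpace X] (e : X → α) : Prop where
  bij : Set.BijOn e Set.univ S
  dist_eq : ∀ a b : X, dist a b = dpath S (e a) (e b)

open Topology

section PathMetric

variable {X : Type*} [EMetricSpace X] {S : Set X} {a b : X}

theorem edist_le_pathInf (S : Set X) (a b : X) : edist a b ≤ pathInf S a b :=
  le_iInf fun γ => le_iInf fun _ => le_iInf fun h0 => le_iInf fun h1 => le_iInf fun _ => by
    rw [← h0, ← h1]
    exact eVariationOn.edist_le γ (left_mem_Icc.2 zero_le_one) (right_mem_Icc.2 zero_le_one)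

theorem exists_path_of_pathInf_lt {B : ℝ≥0∞} (h : pathInf S a b < B) :
    ∃ γ : ℝ → X, ContinuousOn γ (Icc 0 1) ∧ γ 0 = a ∧ γ 1 = b ∧ MapsTo γ (Icc 0 1) S ∧
      eVariationOn γ (Icc 0 1) < B := by
  simpa only [pathInf, iInf_lt_iff, exists_prop] using h

theorem pathInf_lt_of_dpath_lt {e : ℝ} (he : e ≤ 1) (h : dpath S a b < e) :
    pathInf S a b < ENNReal.ofReal e := by
  have hmin : min (pathInf S a b) 1 < ENNReal.ofReal e :=
    (ENNReal.lt_ofReal_iff_toReal_lt ((min_le_right _ _).trans_lt ENNReal.one_lt_top).ne).2 h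
  refine (min_lt_iff.1 hmin).resolve_right fun h1 => ?_
  exact (h1.trans_le (ENNReal.ofReal_le_one.2 he)).false

variable {x : ℕ → X}

theorem cauchySeq_of_dpath
    (hC : ∀ ε : ℝ, 0 < ε → ∃ N : ℕ, ∀ m ≥ N, ∀ n ≥ N, dpath S (x m) (x n) < ε) :
    CauchySeq x := by
  refine EMetric.cauchySeq_iff_NNReal.2 fun ε hε => ?_
  obtain ⟨N, hN⟩ := hC (min ε 1) (lt_min hε one_pos)
  refine ⟨N, fun n hn => ?_⟩
  calc edist (x n) (x N) ≤ pathInf S (x n) (x N) := edist_le_pathInf S _ _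
    _ < ENNReal.ofReal (min ε 1) := pathInf_lt_of_dpath_lt (min_le_right _ _) (hN n hn N le_rfl)
    _ ≤ ε := (ENNReal.ofReal_le_ofReal (min_le_left _ _)).trans_eq ENNReal.ofReal_coe_nnreal

theorem exists_strictMono_dpath_succ_lt
    (hC : ∀ ε : ℝ, 0 < ε → ∃ N : ℕ, ∀ m ≥ N, ∀ n ≥ N, dpath S (x m) (x n) < ε) :
    ∃ φ : ℕ → ℕ, StrictMono φ ∧ ∀ k, dpath S (x (φ (k + 1))) (x (φ k)) < 2⁻¹ ^ k := by
  obtain ⟨φ, hφ, hP⟩ := extraction_forall_of_eventually'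
    (P := fun k n => ∀ m ≥ n, ∀ m' ≥ n, dpath S (x m) (x m') < 2⁻¹ ^ k) fun k =>
      (hC _ (by positivity)).imp fun N hN n hn m hm m' hm' =>
        hN m (hn.trans hm) m' (hn.trans hm')
  exact ⟨φ, hφ, fun k => hP k _ (hφ k.lt_succ_self).le _ le_rfl⟩

end PathMetric

section DyadicConcat

/-- For `0 < s ≤ 1`, the `k` with `s ∈ (2⁻¹ ^ (k + 1), 2⁻¹ ^ k]`. -/
def dyadicIndex (s : ℝ) : ℕ := Nat.log 2 ⌊s⁻¹⌋₊

theorem dyadicIndex_eq {s : ℝ} {k : ℕ} (h₁ : 2⁻¹ ^ (k + 1) < s) (h₂ : s ≤ 2⁻¹ ^ k) :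
    dyadicIndex s = k := by
  have hs : 0 < s := lt_trans (by positivity) h₁
  rw [inv_pow] at h₁ h₂
  have hlo : (2 : ℝ) ^ k ≤ s⁻¹ := (le_inv_comm₀ hs (by positivity)).1 h₂
  have hhi : s⁻¹ < 2 ^ (k + 1) := (inv_lt_comm₀ (by positivity) hs).1 h₁
  have hfloor : ⌊s⁻¹⌋₊ ≠ 0 := (Nat.floor_pos.2 ((one_le_pow₀ one_le_two).trans hlo)).ne'
  rw [dyadicIndex, Nat.log_eq_iff (Or.inr ⟨one_lt_two, hfloor⟩)]
  exact ⟨Nat.le_floor (by exact_mod_cast hlo),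
    (Nat.floor_lt (by positivity)).2 (by exact_mod_cast hhi)⟩

theorem dyadicIndex_spec {s : ℝ} (hs : s ∈ Ioc 0 1) :
    2⁻¹ ^ (dyadicIndex s + 1) < s ∧ s ≤ 2⁻¹ ^ dyadicIndex s := by
  set k := dyadicIndex s
  have hfloor : ⌊s⁻¹⌋₊ ≠ 0 := (Nat.floor_pos.2 ((one_le_inv₀ hs.1).2 hs.2)).ne'
  have hlo : ((2 ^ k : ℕ) : ℝ) ≤ s⁻¹ := (Nat.cast_le.2 (Nat.pow_log_le_self 2 hfloor)).trans
    (Nat.floor_le (inv_pos.2 hs.1).le)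
  have hhi : s⁻¹ < ((2 ^ (k + 1) : ℕ) : ℝ) := (Nat.lt_floor_add_one _).trans_le
    (by exact_mod_cast Nat.lt_pow_succ_log_self one_lt_two _)
  push_cast at hlo hhi
  rw [inv_pow, inv_pow]
  exact ⟨(inv_lt_comm₀ (by positivity) hs.1).2 hhi, (le_inv_comm₀ hs.1 (by positivity)).2 hlo⟩

theorem tendsto_dyadicIndex : Tendsto dyadicIndex (𝓝[>] 0) atTop := by
  refine tendsto_atTop.2 fun K => ?_
  filter_upwards [Ioo_mem_nhdsGT (show (0 : ℝ) < (2 ^ K)⁻¹ by positivity)] with s hs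
  refine Nat.le_log_of_pow_le one_lt_two (Nat.le_floor ?_)
  push_cast
  exact ((lt_inv_comm₀ hs.1 (by positivity)).1 hs.2).le

theorem two_pow_mul_sub_one_mem_Icc {s : ℝ} {k : ℕ} (hs : s ∈ Icc (2⁻¹ ^ (k + 1)) (2⁻¹ ^ k)) :
    2 ^ (k + 1) * s - 1 ∈ Icc (0 : ℝ) 1 := by
  have h₁ : (2 : ℝ) ^ (k + 1) * 2⁻¹ ^ (k + 1) = 1 := by rw [← mul_pow]; norm_num
  have h₂ : (2 : ℝ) ^ (k + 1) * 2⁻¹ ^ k = 2 := by rw [pow_succ, mul_right_comm, ← mul_pow]; norm_num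
  have h2k : (0 : ℝ) ≤ 2 ^ (k + 1) := by positivity
  constructor
  · nlinarith [mul_le_mul_of_nonneg_left hs.1 h2k]
  · nlinarith [mul_le_mul_of_nonneg_left hs.2 h2k]

def dyadicConcat {X : Type*} (Γ : ℕ → ℝ → X) (L : X) (s : ℝ) : X :=
  if 0 < s then Γ (dyadicIndex s) (2 ^ (dyadicIndex s + 1) * s - 1) else L

variable {X : Type*} {Γ : ℕ → ℝ → X} {L : X}

theorem dyadicConcat_zero : dyadicConcat Γ L 0 = L := if_neg (lt_irrefl 0)

theorem dyadicConcat_of_mem_Ioc {s : ℝ} {k : ℕ} (hs : s ∈ Ioc (2⁻¹ ^ (k + 1)) (2⁻¹ ^ k)) :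
    dyadicConcat Γ L s = Γ k (2 ^ (k + 1) * s - 1) := by
  rw [dyadicConcat, if_pos (lt_trans (by positivity) hs.1), dyadicIndex_eq hs.1 hs.2]

theorem dyadicConcat_inv_two_pow (k : ℕ) : dyadicConcat Γ L (2⁻¹ ^ k) = Γ k 1 := by
  rw [dyadicConcat_of_mem_Ioc ⟨pow_lt_pow_right_of_lt_one₀ (by norm_num) (by norm_num)
    k.lt_succ_self, le_rfl⟩, pow_succ, mul_right_comm, ← mul_pow]
  norm_num

theorem dyadicConcat_of_mem_Icc (hjoin : ∀ k, Γ (k + 1) 1 = Γ k 0) {s : ℝ} {k : ℕ}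
    (hs : s ∈ Icc (2⁻¹ ^ (k + 1)) (2⁻¹ ^ k)) :
    dyadicConcat Γ L s = Γ k (2 ^ (k + 1) * s - 1) := by
  rcases hs.1.eq_or_lt with rfl | hlt
  · rw [dyadicConcat_inv_two_pow, hjoin, ← mul_pow]
    norm_num
  · exact dyadicConcat_of_mem_Ioc ⟨hlt, hs.2⟩

theorem mapsTo_dyadicConcat {S : Set X} (hS : ∀ k, MapsTo (Γ k) (Icc 0 1) S) :
    MapsTo (dyadicConcat Γ L) (Ioc 0 1) S := fun s hs => by
  have hk := dyadicIndex_spec hs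
  rw [dyadicConcat_of_mem_Ioc hk]
  exact hS _ (two_pow_mul_sub_one_mem_Icc ⟨hk.1.le, hk.2⟩)

theorem continuousOn_dyadicConcat_Icc_inv_two_pow [TopologicalSpace X]
    (hΓ : ∀ k, ContinuousOn (Γ k) (Icc 0 1)) (hjoin : ∀ k, Γ (k + 1) 1 = Γ k 0) (m : ℕ) :
    ContinuousOn (dyadicConcat Γ L) (Icc (2⁻¹ ^ m) 1) := by
  induction m with
  | zero => simp
  | succ k ih =>
    have hpiece : ContinuousOn (dyadicConcat Γ L) (Icc (2⁻¹ ^ (k + 1)) (2⁻¹ ^ k)) :=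
      ((hΓ k).comp (by fun_prop) fun _ hs => two_pow_mul_sub_one_mem_Icc hs).congr
        fun _ hs => dyadicConcat_of_mem_Icc hjoin hs
    rw [← Icc_union_Icc_eq_Icc (pow_le_pow_of_le_one (by norm_num) (by norm_num) k.le_succ)
      (pow_le_one₀ (by norm_num) (by norm_num))]
    exact hpiece.union_of_isClosed ih isClosed_Icc isClosed_Icc

theorem continuousWithinAt_dyadicConcat_zero [PseudoMetricSpace X] {ε : ℕ → ℝ}
    (hε : Tendsto ε atTop (𝓝 0)) (hΓL : ∀ k, ∀ s ∈ Icc (0 : ℝ) 1, dist (Γ k s) L ≤ ε k) :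
    ContinuousWithinAt (dyadicConcat Γ L) (Icc 0 1) 0 := by
  have hright : Tendsto (dyadicConcat Γ L) (𝓝[>] 0) (𝓝 L) := by
    refine tendsto_iff_dist_tendsto_zero.2 <|
      squeeze_zero' (Eventually.of_forall fun _ => dist_nonneg) ?_ (hε.comp tendsto_dyadicIndex)
    filter_upwards [Ioo_mem_nhdsGT one_pos] with s hs
    have hk := dyadicIndex_spec ⟨hs.1, hs.2.le⟩
    rw [dyadicConcat_of_mem_Ioc hk]
    exact hΓL _ _ (two_pow_mul_sub_one_mem_Icc ⟨hk.1.le, hk.2⟩)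
  have hIci : ContinuousWithinAt (dyadicConcat Γ L) (Ici 0) 0 :=
    continuousWithinAt_Ioi_iff_Ici.1 (by rwa [ContinuousWithinAt, dyadicConcat_zero])
  exact hIci.mono Icc_subset_Ici_self

theorem continuousOn_dyadicConcat [PseudoMetricSpace X] (hΓ : ∀ k, ContinuousOn (Γ k) (Icc 0 1))
    (hjoin : ∀ k, Γ (k + 1) 1 = Γ k 0) {ε : ℕ → ℝ} (hε : Tendsto ε atTop (𝓝 0))
    (hΓL : ∀ k, ∀ s ∈ Icc (0 : ℝ) 1, dist (Γ k s) L ≤ ε k) :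
    ContinuousOn (dyadicConcat Γ L) (Icc 0 1) := by
  rintro s ⟨hs0, hs1⟩
  rcases hs0.eq_or_lt with rfl | hpos
  · exact continuousWithinAt_dyadicConcat_zero hε hΓL
  obtain ⟨m, hm⟩ := ((tendsto_pow_atTop_nhds_zero_of_lt_one (r := (2 : ℝ)⁻¹) (by norm_num)
    (by norm_num)).eventually (gt_mem_nhds hpos)).exists
  have hpiece := continuousOn_dyadicConcat_Icc_inv_two_pow (L := L) hΓ hjoin m s ⟨hm.le, hs1⟩
  refine hpiece.mono_of_mem_nhdsWithin (mem_nhdsWithin.2 ?_)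
  exact ⟨Ioi (2⁻¹ ^ m), isOpen_Ioi, hm, fun y hy => ⟨hy.1.le, hy.2.2⟩⟩

end DyadicConcat

theorem exists_path_through_of_pathInf_lt {X : Type*} [MetricSpace X] {S : Set X} {y : ℕ → X}
    {L : X} (hy : Tendsto y atTop (𝓝 L))
    (hlink : ∀ k, pathInf S (y (k + 1)) (y k) < ENNReal.ofReal (2⁻¹ ^ k)) :
    ∃ γ : ℝ → X, ContinuousOn γ (Icc 0 1) ∧ MapsTo γ (Ioc 0 1) S ∧
      (∀ k, γ (2⁻¹ ^ k) = y k) ∧ γ 0 = L := by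
  choose Γ hΓ hΓ0 hΓ1 hΓS hΓvar using fun k => exists_path_of_pathInf_lt (hlink k)
  have hjoin : ∀ k, Γ (k + 1) 1 = Γ k 0 := fun k => (hΓ1 _).trans (hΓ0 k).symm
  have hΓL : ∀ k, ∀ s ∈ Icc (0 : ℝ) 1, dist (Γ k s) L ≤ 2⁻¹ ^ k + dist (y (k + 1)) L :=
    fun k s hs => calc
      dist (Γ k s) L ≤ dist (Γ k s) (Γ k 0) + dist (Γ k 0) L := dist_triangle _ _ _
      _ ≤ 2⁻¹ ^ k + dist (y (k + 1)) L := by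
        refine add_le_add ?_ (by rw [hΓ0])
        exact (edist_le_ofReal (by positivity)).1 <|
          (eVariationOn.edist_le _ hs (left_mem_Icc.2 zero_le_one)).trans (hΓvar k).le
  have hε : Tendsto (fun k => (2⁻¹ : ℝ) ^ k + dist (y (k + 1)) L) atTop (𝓝 0) := by
    simpa using (tendsto_pow_atTop_nhds_zero_of_lt_one (r := (2 : ℝ)⁻¹) (by norm_num)
      (by norm_num)).add (tendsto_iff_dist_tendsto_zero.1 ((tendsto_add_atTop_iff_nat 1).2 hy))
  exact ⟨dyadicConcat Γ L, continuousOn_dyadicConcat hΓ hjoin hε hΓL, mapsTo_dyadicConcat hΓS,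
    fun k => (dyadicConcat_inv_two_pow k).trans (hΓ1 k), dyadicConcat_zero⟩

theorem stmt17_general {V : Type} [Fintype V] (T : LinkageType V) (d : ℕ)
    (x : ℕ → Conf V d)
    (hC : ∀ ε : ℝ, 0 < ε → ∃ N : ℕ, ∀ m ≥ N, ∀ n ≥ N,
      dpath (EmbSet T d) (x m) (x n) < ε) :
    ∃ (nk : ℕ → ℕ) (γ : ℝ → Conf V d) (t : ℕ → ℝ),
      StrictMono nk ∧
      ContinuousOn γ (Set.Icc 0 1) ∧
      Set.MapsTo γ (Set.Ioc 0 1) (EmbSet T d) ∧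
      StrictAnti t ∧ (∀ k, t k ∈ Set.Ioc (0:ℝ) 1) ∧
      Filter.Tendsto t Filter.atTop (nhds 0) ∧
      (∀ k, γ (t k) = x (nk k)) ∧
      Filter.Tendsto x Filter.atTop (nhds (γ 0)) := by
  obtain ⟨L, hL⟩ := cauchySeq_tendsto_of_complete (cauchySeq_of_dpath hC)
  obtain ⟨nk, hnk, hlink⟩ := exists_strictMono_dpath_succ_lt hC
  have hhalf₀ : (0 : ℝ) ≤ 2⁻¹ := by norm_num
  have hhalf₁ : (2⁻¹ : ℝ) < 1 := by norm_num
  obtain ⟨γ, hγ, hγS, hγt, hγ0⟩ := exists_path_through_of_pathInf_lt (hL.comp hnk.tendsto_atTop)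
    fun k => pathInf_lt_of_dpath_lt (pow_le_one₀ hhalf₀ hhalf₁.le) (hlink k)
  refine ⟨nk, γ, fun k => 2⁻¹ ^ k, hnk, hγ, hγS,
    fun _ _ h => pow_lt_pow_right_of_lt_one₀ (by norm_num) hhalf₁ h,
    fun k => ⟨by positivity, pow_le_one₀ hhalf₀ hhalf₁.le⟩,
    tendsto_pow_atTop_nhds_zero_of_lt_one hhalf₀ hhalf₁, hγt, hγ0 ▸ hL⟩

/-- every `d_path`-Cauchy sequence in `Emb(T_Γ)` has a subsequence lying on a
continuous path `γ : [0,1] → (ℝ^d)^V` with `γ((0,1]) ⊆ Emb(T_Γ)`, sampled at a strictly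
decreasing sequence of parameters tending to `0`, and `γ(0)` is the limit of the sequence
in `(ℝ^d)^V`. -/
theorem stmt17 {V : Type} [Fintype V] (T : LinkageType V) (d : ℕ) (hd : 1 ≤ d)
    (x : ℕ → Conf V d) (hmem : ∀ i, x i ∈ EmbSet T d)
    (hC : ∀ ε : ℝ, 0 < ε → ∃ N : ℕ, ∀ m ≥ N, ∀ n ≥ N,
      dpath (EmbSet T d) (x m) (x n) < ε) :
    ∃ (nk : ℕ → ℕ) (γ : ℝ → Conf V d) (t : ℕ → ℝ),
      StrictMono nk ∧
      ContinuousOn γ (Set.Icc 0 1) ∧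
      Set.MapsTo γ (Set.Ioc 0 1) (EmbSet T d) ∧
      StrictAnti t ∧ (∀ k, t k ∈ Set.Ioc (0:ℝ) 1) ∧
      Filter.Tendsto t Filter.atTop (nhds 0) ∧
      (∀ k, γ (t k) = x (nk k)) ∧
      Filter.Tendsto x Filter.atTop (nhds (γ 0)) :=
  stmt17_general T d x hC

end
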